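/- arXiv:1311.5167 — 6 statements merged into one kernel-verified Lean document; each statement's English description precedes it below -/
import Mathlib

section
/- If g : ℝ^m → ℝ is a bounded C^{1,1} function (its gradient is Lipschitz), then for almost every x ∈ ℝ^m there exists a symmetric matrix ∇²g(x) such that g(x+h) - g(x) = ⟨∇g(x), h⟩ + (1/2)⟨∇²g(x)h, h⟩ + o(|h|²) as h → 0. -/
/-!
By Rademacher's theorem the Lipschitz map `fderiv ℝ g` is differentiable almost everywhere.
At such a point `x` the second derivative `D²g(x)` is symmetric, so the quadratic term
`½ D²g(x) h h` has derivative `D²g(x) h`; the mean value inequality then upgrades the first-order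
expansion of `fderiv ℝ g` at `x` to the second-order expansion of `g`. The Hessian `Q` is the
Riesz representative of `D²g(x)`.
-/

open MeasureTheory Asymptotics
open scoped Topology InnerProductSpace

section Taylor
variable {E F : Type*} [NormedAddCommGroup E] [NormedSpace ℝ E]
  [NormedAddCommGroup F] [NormedSpace ℝ F]

theorem hasFDerivAt_half_apply_self {B : E →L[ℝ] E →L[ℝ] F} (hB : ∀ v w, B v w = B w v) (h : E) :
    HasFDerivAt (fun y => (1 / 2 : ℝ) • B y y) (B h) h := by
  have := ((B.hasFDerivAt (x := h)).clm_apply (hasFDerivAt_id h)).const_smul (1 / 2 : ℝ)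
  convert this using 1
  · ext y; simp
  · ext v
    simp only [smul_apply, add_apply, ContinuousLinearMap.comp_id,
      ContinuousLinearMap.flip_apply, id, hB v h]
    module

theorem isLittleO_taylor_two_of_hasFDerivAt {f : E → F} {f' : E → E →L[ℝ] F}
    {f'' : E →L[ℝ] E →L[ℝ] F} {x : E} (hf : ∀ y, HasFDerivAt f (f' y) y)
    (hf' : HasFDerivAt f' f'' x) :
    (fun h => f (x + h) - f x - f' x h - (1 / 2 : ℝ) • f'' h h) =o[𝓝 0] fun h => ‖h‖ ^ 2 := by
  have hψ : ∀ h ∈ Set.univ,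
      HasFDerivWithinAt (fun h => f (x + h) - f' x h - (1 / 2 : ℝ) • f'' h h)
        (f' (x + h) - f' x - f'' h) Set.univ h := fun h _ =>
    (((hf (x + h)).comp h (hasFDerivAt_id h |>.const_add x) |>.sub (f' x).hasFDerivAt).sub
      (hasFDerivAt_half_apply_self (second_derivative_symmetric hf hf') h)).hasFDerivWithinAt
  have hψ' : (fun h => f' (x + h) - f' x - f'' h) =o[𝓝[Set.univ] 0] fun h => ‖h - 0‖ ^ 1 := by
    simpa [nhdsWithin_univ] using (hasFDerivAt_iff_isLittleO_nhds_zero.mp hf').norm_right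
  have := convex_univ.isLittleO_pow_succ (Set.mem_univ 0) hψ hψ'
  simp only [nhdsWithin_univ, sub_zero, add_zero, map_zero, smul_zero] at this
  convert this using 2 with h
  abel

end Taylor

section InnerProduct
variable {E : Type*} [NormedAddCommGroup E] [InnerProductSpace ℝ E] [CompleteSpace E]

theorem exists_symmetric_clm_inner_eq (B : E →L[ℝ] E →L[ℝ] ℝ) (hB : ∀ u v, B u v = B v u) :
    ∃ Q : E →L[ℝ] E, (∀ u v, ⟪Q u, v⟫_ℝ = ⟪u, Q v⟫_ℝ) ∧ ∀ u v, ⟪Q u, v⟫_ℝ = B u v := by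
  set Q := (InnerProductSpace.toDual ℝ E).symm.toContinuousLinearEquiv.toContinuousLinearMap.comp B
  have hQ : ∀ u v, ⟪Q u, v⟫_ℝ = B u v := by simp [Q]
  exact ⟨Q, fun u v => by rw [hQ, real_inner_comm, hQ, hB], hQ⟩

theorem exists_symmetric_taylor_two_of_differentiableAt_fderiv {g : E → ℝ}
    (hg : Differentiable ℝ g) {x : E} (hx : DifferentiableAt ℝ (fderiv ℝ g) x) :
    ∃ Q : E →L[ℝ] E, (∀ u v, ⟪Q u, v⟫_ℝ = ⟪u, Q v⟫_ℝ) ∧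
      (fun h => g (x + h) - g x - fderiv ℝ g x h - (1 / 2) * ⟪Q h, h⟫_ℝ) =o[𝓝 0]
        fun h => ‖h‖ ^ 2 := by
  have hg' : ∀ y, HasFDerivAt g (fderiv ℝ g y) y := fun y => (hg y).hasFDerivAt
  obtain ⟨Q, hQsymm, hQ⟩ :=
    exists_symmetric_clm_inner_eq _ (second_derivative_symmetric hg' hx.hasFDerivAt)
  refine ⟨Q, hQsymm, ?_⟩
  simpa only [hQ, smul_eq_mul] using isLittleO_taylor_two_of_hasFDerivAt hg' hx.hasFDerivAt

end InnerProduct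

theorem second_order_rademacher_general (m : ℕ)
    (g : EuclideanSpace ℝ (Fin m) → ℝ)
    (hC1 : ContDiff ℝ 1 g)
    (K : NNReal) (hlip : LipschitzWith K (fderiv ℝ g)) :
    ∀ᵐ x ∂(volume : Measure (EuclideanSpace ℝ (Fin m))),
      ∃ Q : EuclideanSpace ℝ (Fin m) →L[ℝ] EuclideanSpace ℝ (Fin m),
        (∀ u v, (inner ℝ (Q u) v : ℝ) = (inner ℝ u (Q v) : ℝ)) ∧
        (fun h => g (x + h) - g x - fderiv ℝ g x h - (1 / 2) * (inner ℝ (Q h) h : ℝ)) =o[𝓝 0]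
          (fun h => ‖h‖ ^ 2) := by
  filter_upwards [hlip.ae_differentiableAt] with x hx
  exact exists_symmetric_taylor_two_of_differentiableAt_fderiv (hC1.differentiable one_ne_zero) hx

/-- Second-order Rademacher theorem: a bounded `C^{1,1}` function on `ℝ^m` admits, at almost
every point, a symmetric second-order Taylor expansion. -/
theorem second_order_rademacher (m : ℕ) (hm : 1 ≤ m)
    (g : EuclideanSpace ℝ (Fin m) → ℝ)
    (M : ℝ) (hbd : ∀ x, |g x| ≤ M)
    (hC1 : ContDiff ℝ 1 g)
    (K : NNReal) (hlip : LipschitzWith K (fderiv ℝ g)) :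
    ∀ᵐ x ∂(volume : Measure (EuclideanSpace ℝ (Fin m))),
      ∃ Q : EuclideanSpace ℝ (Fin m) →L[ℝ] EuclideanSpace ℝ (Fin m),
        (∀ u v, (inner ℝ (Q u) v : ℝ) = (inner ℝ u (Q v) : ℝ)) ∧
        (fun h => g (x + h) - g x - fderiv ℝ g x h - (1 / 2) * (inner ℝ (Q h) h : ℝ)) =o[𝓝 0]
          (fun h => ‖h‖ ^ 2) :=
  second_order_rademacher_general m g hC1 K hlip
end

section
/- Let D ⊂ ℂ^n be a bounded domain of class C^{1,1} that is strongly ℂ-linearly convex, and define d(w,z) = |⟨∂ρ(w), w−z⟩|^{1/2} for w, z ∈ bD. Then d is a quasi-metric: (a) d(w,z) = 0 iff w = z; (b) d(w,z) ≈ d(z,w); (c) d(w,z) ≲ d(w,z') + d(z',z) for all w, z, z' ∈ bD. -/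
/-- The Leray pairing `Δ(w,z) = ⟨∂ρ(w), w−z⟩`. -/
noncomputable def cplxPair {n : ℕ}
    (pc : EuclideanSpace ℂ (Fin n) → EuclideanSpace ℂ (Fin n))
    (w z : EuclideanSpace ℂ (Fin n)) : ℂ :=
  ∑ j, pc w j * (w j - z j)

/-- The quasi-distance `d(w,z) = |Δ(w,z)|^{1/2}`. -/
noncomputable def lerayDist {n : ℕ}
    (pc : EuclideanSpace ℂ (Fin n) → EuclideanSpace ℂ (Fin n))
    (w z : EuclideanSpace ℂ (Fin n)) : ℝ :=
  Real.sqrt ‖cplxPair pc w z‖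

/-!
Moving the base point of the pairing costs a Lipschitz error: with `K` the Lipschitz constant
of `∂ρ`, `Δ(w,z) = Δ(w,z') + Δ(z',z) + ⟨∂ρ(w) − ∂ρ(z'), z' − z⟩` and the last term is at most
`K |w − z'| |z' − z|`. Strong ℂ-linear convexity bounds each Euclidean distance by the
corresponding quasi-distance, `√c₀ |w − z| ≤ d(w,z)`, so the error is at most
`(K/c₀) d(w,z') d(z',z)` and `d(w,z)² ≤ (1 + K/c₀) (d(w,z') + d(z',z))²`. The same identity
applied to `Δ(w,w) = 0` gives `|Δ(w,z) + Δ(z,w)| ≤ K |w − z|² ≤ (K/c₀) d(z,w)²`, which is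
quasi-symmetry.
-/

theorem EuclideanSpace.norm_sum_mul_le {𝕜 ι : Type*} [RCLike 𝕜] [Fintype ι]
    (a b : EuclideanSpace 𝕜 ι) : ‖∑ j, a j * b j‖ ≤ ‖a‖ * ‖b‖ := by
  let a' : EuclideanSpace 𝕜 ι := WithLp.toLp 2 fun j => star (a j)
  have h_inner : ∑ j, a j * b j = inner 𝕜 a' b := by
    simp [a', PiLp.inner_apply, mul_comm]
  have h_norm : ‖a'‖ = ‖a‖ := by
    simp [a', EuclideanSpace.norm_eq]
  rw [h_inner, ← h_norm]
  exact norm_inner_le_norm _ _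

section LerayPairing

variable {n : ℕ} (pc : EuclideanSpace ℂ (Fin n) → EuclideanSpace ℂ (Fin n))

@[simp]
theorem cplxPair_self (w : EuclideanSpace ℂ (Fin n)) : cplxPair pc w w = 0 := by
  simp [cplxPair]

theorem cplxPair_eq_add_add (w z z' : EuclideanSpace ℂ (Fin n)) :
    cplxPair pc w z =
      cplxPair pc w z' + cplxPair pc z' z + ∑ j, (pc w j - pc z' j) * (z' j - z j) := by
  simp only [cplxPair, ← Finset.sum_add_distrib]
  exact Finset.sum_congr rfl fun j _ => by ring

theorem norm_sum_sub_mul_sub_le {K : NNReal} (hpc : LipschitzWith K pc)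
    (w z u v : EuclideanSpace ℂ (Fin n)) :
    ‖∑ j, (pc w j - pc z j) * (u j - v j)‖ ≤ K * ‖w - z‖ * ‖u - v‖ := by
  calc ‖∑ j, (pc w j - pc z j) * (u j - v j)‖
      ≤ ‖pc w - pc z‖ * ‖u - v‖ := by
        simpa using EuclideanSpace.norm_sum_mul_le (pc w - pc z) (u - v)
    _ ≤ K * ‖w - z‖ * ‖u - v‖ := by
        gcongr
        simpa [dist_eq_norm] using hpc.dist_le_mul w z

theorem norm_cplxPair_le_add_add {K : NNReal} (hpc : LipschitzWith K pc)
    (w z z' : EuclideanSpace ℂ (Fin n)) :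
    ‖cplxPair pc w z‖ ≤
      ‖cplxPair pc w z'‖ + ‖cplxPair pc z' z‖ + K * ‖w - z'‖ * ‖z' - z‖ := by
  rw [cplxPair_eq_add_add pc w z z']
  exact (norm_add₃_le ..).trans (by gcongr; exact norm_sum_sub_mul_sub_le pc hpc ..)

theorem norm_cplxPair_le_swap {K : NNReal} (hpc : LipschitzWith K pc)
    (w z : EuclideanSpace ℂ (Fin n)) :
    ‖cplxPair pc w z‖ ≤ ‖cplxPair pc z w‖ + K * ‖w - z‖ ^ 2 := by
  have h_swap : cplxPair pc w z =
      -(cplxPair pc z w + ∑ j, (pc w j - pc z j) * (z j - w j)) := by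
    linear_combination cplxPair_self pc w - cplxPair_eq_add_add pc w w z
  calc ‖cplxPair pc w z‖
      ≤ ‖cplxPair pc z w‖ + K * ‖w - z‖ * ‖z - w‖ := by
        rw [h_swap, norm_neg]
        exact (norm_add_le ..).trans (by gcongr; exact norm_sum_sub_mul_sub_le pc hpc ..)
    _ = ‖cplxPair pc z w‖ + K * ‖w - z‖ ^ 2 := by rw [norm_sub_rev z w]; ring

theorem lerayDist_sq (w z : EuclideanSpace ℂ (Fin n)) :
    lerayDist pc w z ^ 2 = ‖cplxPair pc w z‖ :=
  Real.sq_sqrt (norm_nonneg _)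

theorem lerayDist_le_sqrt_mul {w z : EuclideanSpace ℂ (Fin n)} {C s : ℝ} (hs : 0 ≤ s)
    (h : ‖cplxPair pc w z‖ ≤ C * s ^ 2) : lerayDist pc w z ≤ Real.sqrt C * s := by
  calc lerayDist pc w z ≤ Real.sqrt (C * s ^ 2) := Real.sqrt_le_sqrt h
    _ = Real.sqrt C * s := by rw [Real.sqrt_mul' _ (sq_nonneg s), Real.sqrt_sq hs]

theorem sqrt_mul_norm_sub_le_lerayDist {w z : EuclideanSpace ℂ (Fin n)} {c₀ : ℝ}
    (hconv : c₀ * ‖w - z‖ ^ 2 ≤ ‖cplxPair pc w z‖) :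
    Real.sqrt c₀ * ‖w - z‖ ≤ lerayDist pc w z := by
  calc Real.sqrt c₀ * ‖w - z‖ = Real.sqrt (c₀ * ‖w - z‖ ^ 2) := by
        rw [Real.sqrt_mul' _ (sq_nonneg _), Real.sqrt_sq (norm_nonneg _)]
    _ ≤ lerayDist pc w z := Real.sqrt_le_sqrt hconv

theorem lerayDist_eq_zero_iff {w z : EuclideanSpace ℂ (Fin n)} {c₀ : ℝ} (hc₀ : 0 < c₀)
    (hconv : c₀ * ‖w - z‖ ^ 2 ≤ ‖cplxPair pc w z‖) : lerayDist pc w z = 0 ↔ w = z := by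
  refine ⟨fun h => ?_, by rintro rfl; simp [lerayDist]⟩
  have h_le : Real.sqrt c₀ * ‖w - z‖ ≤ 0 := h ▸ sqrt_mul_norm_sub_le_lerayDist pc hconv
  have h_norm : ‖w - z‖ ≤ 0 := nonpos_of_mul_nonpos_right h_le (Real.sqrt_pos.2 hc₀)
  exact sub_eq_zero.1 (norm_le_zero_iff.1 h_norm)

theorem lerayDist_le_mul_swap {K : NNReal} (hpc : LipschitzWith K pc)
    {w z : EuclideanSpace ℂ (Fin n)} {c₀ : ℝ} (hc₀ : 0 < c₀)
    (hconv : c₀ * ‖z - w‖ ^ 2 ≤ ‖cplxPair pc z w‖) :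
    lerayDist pc w z ≤ Real.sqrt (1 + K / c₀) * lerayDist pc z w := by
  refine lerayDist_le_sqrt_mul pc (s := lerayDist pc z w) (Real.sqrt_nonneg _) ?_
  have h_err : K * ‖w - z‖ ^ 2 ≤ K / c₀ * ‖cplxPair pc z w‖ := by
    calc (K : ℝ) * ‖w - z‖ ^ 2 = K / c₀ * (c₀ * ‖z - w‖ ^ 2) := by
          rw [norm_sub_rev]; field_simp
      _ ≤ K / c₀ * ‖cplxPair pc z w‖ := by gcongr
  rw [lerayDist_sq]
  linarith [norm_cplxPair_le_swap pc hpc w z]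

theorem lerayDist_le_mul_add {K : NNReal} (hpc : LipschitzWith K pc)
    {w z z' : EuclideanSpace ℂ (Fin n)} {c₀ : ℝ} (hc₀ : 0 < c₀)
    (hconv₁ : c₀ * ‖w - z'‖ ^ 2 ≤ ‖cplxPair pc w z'‖)
    (hconv₂ : c₀ * ‖z' - z‖ ^ 2 ≤ ‖cplxPair pc z' z‖) :
    lerayDist pc w z ≤ Real.sqrt (1 + K / c₀) * (lerayDist pc w z' + lerayDist pc z' z) := by
  set a := lerayDist pc w z'
  set b := lerayDist pc z' z
  have ha : 0 ≤ a := Real.sqrt_nonneg _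
  have hb : 0 ≤ b := Real.sqrt_nonneg _
  have h_prod : c₀ * (‖w - z'‖ * ‖z' - z‖) ≤ a * b := by
    calc c₀ * (‖w - z'‖ * ‖z' - z‖)
        = (Real.sqrt c₀ * ‖w - z'‖) * (Real.sqrt c₀ * ‖z' - z‖) := by
          rw [mul_mul_mul_comm, Real.mul_self_sqrt hc₀.le]
      _ ≤ a * b := mul_le_mul (sqrt_mul_norm_sub_le_lerayDist pc hconv₁)
          (sqrt_mul_norm_sub_le_lerayDist pc hconv₂) (by positivity) ha
  have h_err : K * ‖w - z'‖ * ‖z' - z‖ ≤ K / c₀ * (a * b) := by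
    calc (K : ℝ) * ‖w - z'‖ * ‖z' - z‖ = K / c₀ * (c₀ * (‖w - z'‖ * ‖z' - z‖)) := by
          field_simp
      _ ≤ K / c₀ * (a * b) := by gcongr
  have h_sq : ‖cplxPair pc w z‖ ≤ a ^ 2 + b ^ 2 + K / c₀ * (a * b) := by
    rw [lerayDist_sq, lerayDist_sq]
    linarith [norm_cplxPair_le_add_add pc hpc w z z']
  apply lerayDist_le_sqrt_mul pc (add_nonneg ha hb)
  have hK : 0 ≤ (K : ℝ) / c₀ := by positivity
  nlinarith [mul_nonneg ha hb, mul_nonneg hK (mul_nonneg ha hb)]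

end LerayPairing

theorem lerayDist_quasi_metric_general (n : ℕ)
    (ρ : EuclideanSpace ℂ (Fin n) → ℝ)
    (pc : EuclideanSpace ℂ (Fin n) → EuclideanSpace ℂ (Fin n))
    (Kpc : NNReal) (hpcLip : LipschitzWith Kpc pc)
    (c₀ : ℝ) (hc₀ : 0 < c₀)
    (hconv : ∀ z, ρ z ≤ 0 → ∀ w, ρ w = 0 →
      c₀ * ‖w - z‖ ^ 2 ≤ ‖cplxPair pc w z‖) :
    (∀ w z, ρ w = 0 → ρ z = 0 → (lerayDist pc w z = 0 ↔ w = z)) ∧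
    (∃ C : ℝ, 0 < C ∧ ∀ w z, ρ w = 0 → ρ z = 0 →
      lerayDist pc w z ≤ C * lerayDist pc z w) ∧
    (∃ C : ℝ, 0 < C ∧ ∀ w z z', ρ w = 0 → ρ z = 0 → ρ z' = 0 →
      lerayDist pc w z ≤ C * (lerayDist pc w z' + lerayDist pc z' z)) := by
  have hC : 0 < Real.sqrt (1 + Kpc / c₀) := Real.sqrt_pos.2 (by positivity)
  refine ⟨fun w z hw hz => lerayDist_eq_zero_iff pc hc₀ (hconv z hz.le w hw),
    ⟨_, hC, fun w z hw hz => lerayDist_le_mul_swap pc hpcLip hc₀ (hconv w hw.le z hz)⟩,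
    ⟨_, hC, fun w z z' hw hz hz' =>
      lerayDist_le_mul_add pc hpcLip hc₀ (hconv z' hz'.le w hw) (hconv z hz.le z' hz')⟩⟩

/-- For a bounded, strongly ℂ-linearly convex `C^{1,1}` domain, `d(w,z) = |⟨∂ρ(w), w−z⟩|^{1/2}`
is a quasi-metric on the boundary: (a) `d(w,z) = 0 ↔ w = z`; (b) `d(w,z) ≈ d(z,w)`;
(c) `d(w,z) ≲ d(w,z') + d(z',z)`. -/
theorem lerayDist_quasi_metric (n : ℕ) (hn : 2 ≤ n)
    (ρ : EuclideanSpace ℂ (Fin n) → ℝ)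
    (D : Set (EuclideanSpace ℂ (Fin n)))
    (hD : D = {z | ρ z < 0}) (hbdd : Bornology.IsBounded D)
    (hρ1 : ContDiff ℝ 1 ρ)
    (pc : EuclideanSpace ℂ (Fin n) → EuclideanSpace ℂ (Fin n))
    (hpc : ∀ w v, fderiv ℝ ρ w v = 2 * (∑ j, pc w j * v j).re)
    (Kpc : NNReal) (hpcLip : LipschitzWith Kpc pc)
    (hgrad : ∀ w, ρ w = 0 → fderiv ℝ ρ w ≠ 0)
    (c₀ : ℝ) (hc₀ : 0 < c₀)
    (hconv : ∀ z, ρ z ≤ 0 → ∀ w, ρ w = 0 →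
      c₀ * ‖w - z‖ ^ 2 ≤ ‖cplxPair pc w z‖) :
    (∀ w z, ρ w = 0 → ρ z = 0 → (lerayDist pc w z = 0 ↔ w = z)) ∧
    (∃ C : ℝ, 0 < C ∧ ∀ w z, ρ w = 0 → ρ z = 0 →
      lerayDist pc w z ≤ C * lerayDist pc z w) ∧
    (∃ C : ℝ, 0 < C ∧ ∀ w z z', ρ w = 0 → ρ z = 0 → ρ z' = 0 →
      lerayDist pc w z ≤ C * (lerayDist pc w z' + lerayDist pc z' z)) :=
  lerayDist_quasi_metric_general n ρ pc Kpc hpcLip c₀ hc₀ hconv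
end

section
/- With D ⊂ ℂ^n bounded, strongly ℂ-linearly convex and of class C^{1,1}, and d(w,z) = |⟨∂ρ(w), w−z⟩|^{1/2}, one has |w−z| ≲ d(w,z) ≲ |w−z|^{1/2} for all w, z ∈ bD. -/
theorem mem_closure_setOf_neg_of_fderiv_ne_zero {E : Type*} [NormedAddCommGroup E]
    [NormedSpace ℝ E] {f : E → ℝ} {x : E} (hx : f x = 0) (hf : fderiv ℝ f x ≠ 0) :
    x ∈ closure {y | f y < 0} := by
  rw [mem_closure_iff_frequently]
  by_contra hxc
  refine hf (IsLocalMin.fderiv_eq_zero ?_)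
  filter_upwards [Filter.not_frequently.mp hxc] with y hy
  simpa [hx] using hy

section LerayDist

variable {n : ℕ} (pc : EuclideanSpace ℂ (Fin n) → EuclideanSpace ℂ (Fin n))
  (w z : EuclideanSpace ℂ (Fin n))

theorem norm_cplxPair_le : ‖cplxPair pc w z‖ ≤ ‖pc w‖ * ‖w - z‖ := by
  rw [EuclideanSpace.norm_eq, EuclideanSpace.norm_eq]
  calc ‖cplxPair pc w z‖ ≤ ∑ j, ‖pc w j‖ * ‖(w - z) j‖ := by
        simpa only [cplxPair, norm_mul, PiLp.sub_apply]
          using norm_sum_le Finset.univ fun j ↦ pc w j * (w j - z j)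
    _ ≤ _ := Real.sum_mul_le_sqrt_mul_sqrt _ _ _

theorem norm_sub_le_inv_sqrt_mul_lerayDist {c : ℝ} (hc : 0 < c)
    (h : c * ‖w - z‖ ^ 2 ≤ ‖cplxPair pc w z‖) :
    ‖w - z‖ ≤ (√c)⁻¹ * lerayDist pc w z := by
  have hsqrt : √c * ‖w - z‖ ≤ lerayDist pc w z := by
    rw [← Real.sqrt_sq (norm_nonneg (w - z)), ← Real.sqrt_mul hc.le]
    exact Real.sqrt_le_sqrt h
  rwa [le_inv_mul_iff₀ (Real.sqrt_pos.mpr hc)]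

theorem lerayDist_le_sqrt_mul_sqrt_norm_sub {M : ℝ} (hM : ‖pc w‖ ≤ M) :
    lerayDist pc w z ≤ √M * √‖w - z‖ := by
  rw [← Real.sqrt_mul' M (norm_nonneg _)]
  exact Real.sqrt_le_sqrt <| (norm_cplxPair_le pc w z).trans <|
    mul_le_mul_of_nonneg_right hM (norm_nonneg _)

end LerayDist

theorem lerayDist_compare_euclidean_general (n : ℕ)
    (ρ : EuclideanSpace ℂ (Fin n) → ℝ)
    (D : Set (EuclideanSpace ℂ (Fin n)))
    (hD : D = {z | ρ z < 0}) (hbdd : Bornology.IsBounded D)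
    (pc : EuclideanSpace ℂ (Fin n) → EuclideanSpace ℂ (Fin n))
    (Kpc : NNReal) (hpcLip : LipschitzWith Kpc pc)
    (hgrad : ∀ w, ρ w = 0 → fderiv ℝ ρ w ≠ 0)
    (c₀ : ℝ) (hc₀ : 0 < c₀)
    (hconv : ∀ z, ρ z ≤ 0 → ∀ w, ρ w = 0 →
      c₀ * ‖w - z‖ ^ 2 ≤ ‖cplxPair pc w z‖) :
    ∃ C : ℝ, 0 < C ∧ ∀ w z, ρ w = 0 → ρ z = 0 →
      ‖w - z‖ ≤ C * lerayDist pc w z ∧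
      lerayDist pc w z ≤ C * Real.sqrt ‖w - z‖ := by
  obtain ⟨M, hM⟩ := isBounded_iff_forall_norm_le.mp (hpcLip.isBounded_image hbdd.closure)
  have hpc_bdd : ∀ w, ρ w = 0 → ‖pc w‖ ≤ M := fun w hw ↦ hM _ <| Set.mem_image_of_mem pc <| by
    rw [hD]
    exact mem_closure_setOf_neg_of_fderiv_ne_zero hw (hgrad w hw)
  refine ⟨max (√c₀)⁻¹ √M, lt_max_of_lt_left (inv_pos.mpr (Real.sqrt_pos.mpr hc₀)),
    fun w z hw hz ↦ ⟨?_, ?_⟩⟩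
  · calc ‖w - z‖ ≤ (√c₀)⁻¹ * lerayDist pc w z :=
          norm_sub_le_inv_sqrt_mul_lerayDist pc w z hc₀ (hconv z hz.le w hw)
      _ ≤ max (√c₀)⁻¹ √M * lerayDist pc w z :=
          mul_le_mul_of_nonneg_right (le_max_left _ _) (Real.sqrt_nonneg _)
  · calc lerayDist pc w z ≤ √M * √‖w - z‖ :=
          lerayDist_le_sqrt_mul_sqrt_norm_sub pc w z (hpc_bdd w hw)
      _ ≤ max (√c₀)⁻¹ √M * √‖w - z‖ :=
          mul_le_mul_of_nonneg_right (le_max_right _ _) (Real.sqrt_nonneg _)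

/-- For a bounded, strongly ℂ-linearly convex `C^{1,1}` domain,
`|w−z| ≲ d(w,z) ≲ |w−z|^{1/2}` on the boundary. -/
theorem lerayDist_compare_euclidean (n : ℕ) (hn : 2 ≤ n)
    (ρ : EuclideanSpace ℂ (Fin n) → ℝ)
    (D : Set (EuclideanSpace ℂ (Fin n)))
    (hD : D = {z | ρ z < 0}) (hbdd : Bornology.IsBounded D)
    (hρ1 : ContDiff ℝ 1 ρ)
    (pc : EuclideanSpace ℂ (Fin n) → EuclideanSpace ℂ (Fin n))
    (hpc : ∀ w v, fderiv ℝ ρ w v = 2 * (∑ j, pc w j * v j).re)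
    (Kpc : NNReal) (hpcLip : LipschitzWith Kpc pc)
    (hgrad : ∀ w, ρ w = 0 → fderiv ℝ ρ w ≠ 0)
    (c₀ : ℝ) (hc₀ : 0 < c₀)
    (hconv : ∀ z, ρ z ≤ 0 → ∀ w, ρ w = 0 →
      c₀ * ‖w - z‖ ^ 2 ≤ ‖cplxPair pc w z‖) :
    ∃ C : ℝ, 0 < C ∧ ∀ w z, ρ w = 0 → ρ z = 0 →
      ‖w - z‖ ≤ C * lerayDist pc w z ∧
      lerayDist pc w z ≤ C * Real.sqrt ‖w - z‖ :=
  lerayDist_compare_euclidean_general n ρ D hD hbdd pc Kpc hpcLip hgrad c₀ hc₀ hconv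
end

section
/- Neither implication in the chain 'strongly convex ⇒ strongly ℂ-linearly convex ⇒ strongly pseudo-convex' can be reversed: the domain in ℂ² defined by ρ̃(z) = |z₁|² − Im(z₂) + |z₂|⁴ is strongly ℂ-linearly convex near (0,0) but not strongly convex there, and the domain defined by ρ(z) = 2x₁² − y₁² − y₂ (z₁ = x₁ + iy₁, z₂ = x₂ + iy₂) is strongly pseudo-convex at the boundary point (0,0) but fails the strong ℂ-linear convexity inequality |Δ(w₀,z)| ≥ c|w₀ − z|² there. -/
/-- `ρ̃(z) = |z₁|² − Im z₂ + |z₂|⁴` on ℂ². -/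
noncomputable def rhoTilde (z : EuclideanSpace ℂ (Fin 2)) : ℝ :=
  ‖z 0‖ ^ 2 - (z 1).im + ‖z 1‖ ^ 4

/-- `ρ(z) = 2x₁² − y₁² − y₂` on ℂ² (with `z₁ = x₁ + iy₁`, `z₂ = x₂ + iy₂`). -/
noncomputable def rhoHeis (z : EuclideanSpace ℂ (Fin 2)) : ℝ :=
  2 * (z 0).re ^ 2 - (z 0).im ^ 2 - (z 1).im

/-- `Δ̃(w,z) = ⟨∂ρ̃(w), w − z⟩` for `ρ̃` above:
`∂ρ̃(w) = (w̄₁, i/2 + 2|w₂|² w̄₂)`. -/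
noncomputable def deltaTilde (w z : EuclideanSpace ℂ (Fin 2)) : ℂ :=
  (starRingEnd ℂ) (w 0) * (w 0 - z 0) +
    (Complex.I / 2 + 2 * (‖w 1‖ : ℂ) ^ 2 * (starRingEnd ℂ) (w 1)) * (w 1 - z 1)


/-!
For `ρ̃`, convexity of `|·|²` and `|·|⁴` gives `2 Re Δ̃(w,z) ≥ ρ̃(w) − ρ̃(z) + |w₁ − z₁|²`, so for
`w` on the boundary and `z` inside, `|Δ̃|` controls `|w₁ − z₁|²`. The remaining terms of `Δ̃` besides
`(i/2)(w₂ − z₂)` are at most `|w₁||w₁ − z₁| + 2|w₂|³|w₂ − z₂|`, so near `0` `|Δ̃|` also controls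
`|w₂ − z₂|` whenever `|w₁ − z₁| ≤ |w₂ − z₂|`. Strong convexity fails because the real Hessian of `ρ̃`
at `0` vanishes in the complex tangent direction `(0,1)`, along which `ρ̃` only grows like `|z₂|⁴`.

For `ρ`, the Levi form on the complex tangent line `{h₂ = 0}` is `|h₁|²/2`, yet the interior
point `(i, 0)` has `Δ((0,0),z) = 0`.
-/

open ComplexConjugate

theorem EuclideanSpace.norm_sq_fin_two {𝕜 : Type*} [RCLike 𝕜] (v : EuclideanSpace 𝕜 (Fin 2)) :
    ‖v‖ ^ 2 = ‖v 0‖ ^ 2 + ‖v 1‖ ^ 2 := by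
  rw [EuclideanSpace.norm_sq_eq, Fin.sum_univ_two]

theorem norm_pow_four_add_inner_le {F : Type*} [NormedAddCommGroup F] [InnerProductSpace ℝ F]
    (x y : F) : ‖x‖ ^ 4 + 4 * ‖x‖ ^ 2 * inner ℝ x (y - x) ≤ ‖y‖ ^ 4 := by
  have hsq : ‖x‖ ^ 2 + 2 * inner ℝ x (y - x) ≤ ‖y‖ ^ 2 := by
    have := norm_add_sq_real x (y - x)
    rw [add_sub_cancel] at this
    nlinarith [sq_nonneg ‖y - x‖]
  nlinarith [sq_nonneg (‖y‖ ^ 2 - ‖x‖ ^ 2), sq_nonneg ‖x‖]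

theorem deltaTilde_eq (w z : EuclideanSpace ℂ (Fin 2)) :
    deltaTilde w z = (w 0 - z 0) * conj (w 0) + Complex.I / 2 * (w 1 - z 1)
      + ((2 * ‖w 1‖ ^ 2 : ℝ) : ℂ) * ((w 1 - z 1) * conj (w 1)) := by
  simp only [deltaTilde]
  push_cast
  ring

/-- `Re Δ̃(w, z)` is half the real derivative of `ρ̃` at `w` in the direction `w − z`. -/
theorem re_deltaTilde (w z : EuclideanSpace ℂ (Fin 2)) :
    (deltaTilde w z).re = inner ℝ (w 0) (w 0 - z 0) + ((z 1).im - (w 1).im) / 2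
      + 2 * ‖w 1‖ ^ 2 * inner ℝ (w 1) (w 1 - z 1) := by
  simp only [deltaTilde_eq, Complex.inner, Complex.add_re, Complex.re_ofReal_mul]
  congr 2
  simp only [Complex.mul_re, Complex.div_ofNat_re, Complex.I_re, Complex.div_ofNat_im,
    Complex.I_im, Complex.sub_re, Complex.sub_im]
  ring

theorem rhoTilde_sub_rhoTilde_add_norm_sq_le (w z : EuclideanSpace ℂ (Fin 2)) :
    rhoTilde w - rhoTilde z + ‖w 0 - z 0‖ ^ 2 ≤ 2 * (deltaTilde w z).re := by
  have h₀ := norm_sub_sq_real (w 0) (w 0 - z 0)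
  have h₁ := norm_pow_four_add_inner_le (w 1) (z 1)
  rw [sub_sub_cancel] at h₀
  rw [← neg_sub, inner_neg_right] at h₁
  rw [re_deltaTilde, rhoTilde, rhoTilde]
  linarith

theorem norm_deltaTilde_ge (w z : EuclideanSpace ℂ (Fin 2)) :
    ‖w 1 - z 1‖ / 2 - ‖w 0‖ * ‖w 0 - z 0‖ - 2 * ‖w 1‖ ^ 3 * ‖w 1 - z 1‖ ≤ ‖deltaTilde w z‖ := by
  set a := (w 0 - z 0) * conj (w 0)
  set c := ((2 * ‖w 1‖ ^ 2 : ℝ) : ℂ) * ((w 1 - z 1) * conj (w 1))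
  have ha : ‖a‖ = ‖w 0‖ * ‖w 0 - z 0‖ := by simp [a, mul_comm]
  have hc : ‖c‖ = 2 * ‖w 1‖ ^ 3 * ‖w 1 - z 1‖ := by
    simp only [c, Complex.norm_mul, Complex.norm_real, Real.norm_eq_abs, RCLike.norm_conj]
    rw [abs_of_nonneg (by positivity)]
    ring
  have hb : ‖deltaTilde w z - a - c‖ = ‖w 1 - z 1‖ / 2 := by
    have : deltaTilde w z - a - c = Complex.I / 2 * (w 1 - z 1) := by rw [deltaTilde_eq]; ring
    simp [this, div_mul_eq_mul_div]
  linarith [norm_sub_le (deltaTilde w z - a) c, norm_sub_le (deltaTilde w z) a]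

theorem rhoTilde_strongly_linearly_convex : ∃ ε : ℝ, 0 < ε ∧ ∃ c : ℝ, 0 < c ∧
    ∀ w z : EuclideanSpace ℂ (Fin 2), rhoTilde w = 0 → ‖w‖ < ε → rhoTilde z < 0 → ‖z‖ < ε →
      c * ‖w - z‖ ^ 2 ≤ ‖deltaTilde w z‖ := by
  refine ⟨1 / 4, by norm_num, 7 / 32, by norm_num, fun w z hw hwε hz hzε => ?_⟩
  have hw₀ : ‖w 0‖ < 1 / 4 := (PiLp.norm_apply_le w 0).trans_lt hwε
  have hw₁ : ‖w 1‖ < 1 / 4 := (PiLp.norm_apply_le w 1).trans_lt hwε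
  have hz₁ : ‖z 1‖ < 1 / 4 := (PiLp.norm_apply_le z 1).trans_lt hzε
  set a := ‖w 0 - z 0‖
  set b := ‖w 1 - z 1‖
  have hb : b < 1 / 2 := by linarith [norm_sub_le (w 1) (z 1)]
  have hRe : a ^ 2 ≤ 2 * ‖deltaTilde w z‖ := by
    linarith [rhoTilde_sub_rhoTilde_add_norm_sq_le w z, Complex.re_le_norm (deltaTilde w z)]
  have hIm : 15 / 32 * b - a / 4 ≤ ‖deltaTilde w z‖ := by
    have h₀ : ‖w 0‖ * a ≤ a / 4 := by nlinarith [norm_nonneg (w 0 - z 0)]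
    have h₁ : 2 * ‖w 1‖ ^ 3 * b ≤ b / 32 := by
      have : ‖w 1‖ ^ 3 ≤ (1 / 4) ^ 3 := by gcongr
      nlinarith [norm_nonneg (w 1 - z 1)]
    linarith [norm_deltaTilde_ge w z]
  rw [show ‖w - z‖ ^ 2 = a ^ 2 + b ^ 2 from EuclideanSpace.norm_sq_fin_two (w - z)]
  rcases le_total a b with hab | hba
  · nlinarith [norm_nonneg (w 0 - z 0)]
  · nlinarith [norm_nonneg (w 1 - z 1)]

theorem fderiv_fderiv_eq_of_hasFDerivAt {E F : Type*} [NormedAddCommGroup E] [NormedSpace ℝ E]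
    [NormedAddCommGroup F] [NormedSpace ℝ F] {f : E → F} {f' : E → E →L[ℝ] F}
    {f'' : E →L[ℝ] E →L[ℝ] F} {x : E} (hf : ∀ y, HasFDerivAt f (f' y) y)
    (hf' : HasFDerivAt f' f'' x) : fderiv ℝ (fderiv ℝ f) x = f'' := by
  rw [funext fun y => (hf y).fderiv]
  exact hf'.fderiv

noncomputable def coordRe (i : Fin 2) : EuclideanSpace ℂ (Fin 2) →L[ℝ] ℝ :=
  Complex.reCLM.comp ((EuclideanSpace.proj i).restrictScalars ℝ)

noncomputable def coordIm (i : Fin 2) : EuclideanSpace ℂ (Fin 2) →L[ℝ] ℝ :=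
  Complex.imCLM.comp ((EuclideanSpace.proj i).restrictScalars ℝ)

@[simp] theorem coordRe_apply (i : Fin 2) (v : EuclideanSpace ℂ (Fin 2)) :
    coordRe i v = (v i).re := rfl

@[simp] theorem coordIm_apply (i : Fin 2) (v : EuclideanSpace ℂ (Fin 2)) :
    coordIm i v = (v i).im := rfl

section Coordinates

local notation "x₁" => coordRe 0
local notation "y₁" => coordIm 0
local notation "x₂" => coordRe 1
local notation "y₂" => coordIm 1

noncomputable def rhoTildeFDeriv (p : EuclideanSpace ℂ (Fin 2)) :
    EuclideanSpace ℂ (Fin 2) →L[ℝ] ℝ :=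
  (2 * x₁ p) • x₁ + (2 * y₁ p) • y₁ - y₂
    + (4 * (x₂ p * x₂ p + y₂ p * y₂ p) * x₂ p) • x₂
    + (4 * (x₂ p * x₂ p + y₂ p * y₂ p) * y₂ p) • y₂

noncomputable def rhoTildeHessianZero :
    EuclideanSpace ℂ (Fin 2) →L[ℝ] EuclideanSpace ℂ (Fin 2) →L[ℝ] ℝ :=
  ((2 : ℝ) • x₁).smulRight x₁ + ((2 : ℝ) • y₁).smulRight y₁

theorem rhoTilde_eq_coord : rhoTilde = fun p =>
    x₁ p * x₁ p + y₁ p * y₁ p - y₂ p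
      + (x₂ p * x₂ p + y₂ p * y₂ p) * (x₂ p * x₂ p + y₂ p * y₂ p) := by
  funext p
  simp only [rhoTilde, coordRe_apply, coordIm_apply, Complex.sq_norm, Complex.normSq_apply,
    show (4 : ℕ) = 2 * 2 from rfl, pow_mul]
  ring

theorem hasFDerivAt_rhoTilde (p : EuclideanSpace ℂ (Fin 2)) :
    HasFDerivAt rhoTilde (rhoTildeFDeriv p) p := by
  rw [rhoTilde_eq_coord]
  have h₁ := (x₁).hasFDerivAt (x := p)
  have h₂ := (y₁).hasFDerivAt (x := p)
  have h₃ := (x₂).hasFDerivAt (x := p)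
  have h₄ := (y₂).hasFDerivAt (x := p)
  have hq := (h₃.mul h₃).add (h₄.mul h₄)
  refine ((((h₁.mul h₁).add (h₂.mul h₂)).sub h₄).add (hq.mul hq)).congr_fderiv ?_
  ext v
  simp only [rhoTildeFDeriv, coordRe_apply, coordIm_apply, Pi.add_apply, Pi.mul_apply, add_apply,
    sub_apply, smul_apply, smul_eq_mul, smul_add]
  ring

theorem hasFDerivAt_rhoTildeFDeriv_zero :
    HasFDerivAt rhoTildeFDeriv rhoTildeHessianZero 0 := by
  have h₁ := (x₁).hasFDerivAt (x := 0)
  have h₂ := (y₁).hasFDerivAt (x := 0)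
  have h₃ := (x₂).hasFDerivAt (x := 0)
  have h₄ := (y₂).hasFDerivAt (x := 0)
  have hq := ((h₃.mul h₃).add (h₄.mul h₄)).const_mul (4 : ℝ)
  refine (((((h₁.const_mul 2).smul_const x₁).add ((h₂.const_mul 2).smul_const y₁)).sub_const
    y₂).add ((hq.mul h₃).smul_const x₂) |>.add ((hq.mul h₄).smul_const y₂)).congr_fderiv ?_
  ext v u
  simp [rhoTildeHessianZero]

noncomputable def rhoHeisFDeriv (p : EuclideanSpace ℂ (Fin 2)) :
    EuclideanSpace ℂ (Fin 2) →L[ℝ] ℝ :=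
  (4 * x₁ p) • x₁ - (2 * y₁ p) • y₁ - y₂

noncomputable def rhoHeisHessian :
    EuclideanSpace ℂ (Fin 2) →L[ℝ] EuclideanSpace ℂ (Fin 2) →L[ℝ] ℝ :=
  ((4 : ℝ) • x₁).smulRight x₁ - ((2 : ℝ) • y₁).smulRight y₁

theorem rhoHeis_eq_coord : rhoHeis = fun p => 2 * (x₁ p * x₁ p) - y₁ p * y₁ p - y₂ p := by
  funext p
  simp only [rhoHeis, coordRe_apply, coordIm_apply]
  ring

theorem hasFDerivAt_rhoHeis (p : EuclideanSpace ℂ (Fin 2)) :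
    HasFDerivAt rhoHeis (rhoHeisFDeriv p) p := by
  rw [rhoHeis_eq_coord]
  have h₁ := (x₁).hasFDerivAt (x := p)
  have h₂ := (y₁).hasFDerivAt (x := p)
  refine ((((h₁.mul h₁).const_mul (2 : ℝ)).sub (h₂.mul h₂)).sub (y₂).hasFDerivAt).congr_fderiv ?_
  ext v
  simp only [rhoHeisFDeriv, coordRe_apply, coordIm_apply, add_apply, sub_apply, smul_apply,
    smul_eq_mul, smul_add]
  ring

theorem hasFDerivAt_rhoHeisFDeriv (p : EuclideanSpace ℂ (Fin 2)) :
    HasFDerivAt rhoHeisFDeriv rhoHeisHessian p := by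
  refine ((((x₁).hasFDerivAt.const_mul (4 : ℝ)).smul_const x₁).sub
    (((y₁).hasFDerivAt.const_mul (2 : ℝ)).smul_const y₁) |>.sub_const y₂).congr_fderiv ?_
  ext v u
  simp [rhoHeisHessian]

end Coordinates

theorem rhoHeisHessian_add_I_smul (h : EuclideanSpace ℂ (Fin 2)) :
    rhoHeisHessian h h + rhoHeisHessian (Complex.I • h) (Complex.I • h) = 2 * ‖h 0‖ ^ 2 := by
  simp only [rhoHeisHessian, sub_apply, ContinuousLinearMap.smulRight_apply, smul_apply,
    coordRe_apply, coordIm_apply, smul_eq_mul, PiLp.smul_apply, Complex.mul_re, Complex.mul_im,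
    Complex.I_re, Complex.I_im, Complex.sq_norm, Complex.normSq_apply]
  ring

theorem rhoTilde_not_strongly_convex : ¬ ∃ c : ℝ, 0 < c ∧ ∀ H : EuclideanSpace ℂ (Fin 2),
    fderiv ℝ rhoTilde 0 H = 0 → c * ‖H‖ ^ 2 ≤ fderiv ℝ (fderiv ℝ rhoTilde) 0 H H := by
  rintro ⟨c, hc, hconvex⟩
  set H : EuclideanSpace ℂ (Fin 2) := EuclideanSpace.single 1 1
  have hH₀ : H 0 = 0 := by simp [H]
  have hH₁ : H 1 = 1 := by simp [H]
  have htangent : fderiv ℝ rhoTilde 0 H = 0 := by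
    simp [(hasFDerivAt_rhoTilde 0).fderiv, rhoTildeFDeriv, hH₁]
  have hflat : fderiv ℝ (fderiv ℝ rhoTilde) 0 H H = 0 := by
    rw [fderiv_fderiv_eq_of_hasFDerivAt hasFDerivAt_rhoTilde hasFDerivAt_rhoTildeFDeriv_zero]
    simp [rhoTildeHessianZero, hH₀]
  have hnorm : ‖H‖ = 1 := by simp [H]
  have := hconvex H htangent
  rw [hflat, hnorm] at this
  linarith

theorem rhoHeis_strongly_pseudoconvex : ∃ c : ℝ, 0 < c ∧ ∀ h : EuclideanSpace ℂ (Fin 2),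
    Complex.I / 2 * h 1 = 0 →
      c * ‖h‖ ^ 2 ≤ (1 / 4) * (fderiv ℝ (fderiv ℝ rhoHeis) 0 h h +
        fderiv ℝ (fderiv ℝ rhoHeis) 0 (Complex.I • h) (Complex.I • h)) := by
  refine ⟨1 / 2, by norm_num, fun h htangent => ?_⟩
  have hh₁ : h 1 = 0 := by simpa using htangent
  rw [fderiv_fderiv_eq_of_hasFDerivAt hasFDerivAt_rhoHeis (hasFDerivAt_rhoHeisFDeriv 0),
    rhoHeisHessian_add_I_smul, EuclideanSpace.norm_sq_fin_two, hh₁, norm_zero]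
  linarith

theorem rhoHeis_not_strongly_linearly_convex : ¬ ∃ c : ℝ, 0 < c ∧
    ∀ z : EuclideanSpace ℂ (Fin 2), rhoHeis z < 0 →
      c * ‖(0 : EuclideanSpace ℂ (Fin 2)) - z‖ ^ 2 ≤ ‖Complex.I / 2 * (0 - z 1)‖ := by
  rintro ⟨c, hc, hconvex⟩
  set z : EuclideanSpace ℂ (Fin 2) := EuclideanSpace.single 0 Complex.I
  have hz₀ : z 0 = Complex.I := by simp [z]
  have hz₁ : z 1 = 0 := by simp [z]
  have hinside : rhoHeis z < 0 := by simp [rhoHeis, hz₀, hz₁]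
  have := hconvex z hinside
  rw [zero_sub, norm_neg, hz₁] at this
  simp [z] at this
  linarith

/-- For `ρ`, the complex tangent space at `0` is encoded as `{h : (i/2)h₂ = 0}` and `Δ((0,0),z)` as
`(i/2)(0 − z₂)`. -/
theorem convexity_implications_not_reversible :
    -- ρ̃ is strongly ℂ-linearly convex near (0,0) ...
    (∃ ε : ℝ, 0 < ε ∧ ∃ c : ℝ, 0 < c ∧ ∀ w z : EuclideanSpace ℂ (Fin 2),
      rhoTilde w = 0 → ‖w‖ < ε → rhoTilde z < 0 → ‖z‖ < ε →
        c * ‖w - z‖ ^ 2 ≤ ‖deltaTilde w z‖) ∧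
    -- ... but not strongly convex there
    (¬ ∃ c : ℝ, 0 < c ∧ ∀ H : EuclideanSpace ℂ (Fin 2),
      fderiv ℝ rhoTilde 0 H = 0 →
        c * ‖H‖ ^ 2 ≤ fderiv ℝ (fderiv ℝ rhoTilde) 0 H H) ∧
    -- ρ is strongly pseudo-convex at the boundary point (0,0) ...
    (∃ c : ℝ, 0 < c ∧ ∀ h : EuclideanSpace ℂ (Fin 2),
      Complex.I / 2 * h 1 = 0 →
        c * ‖h‖ ^ 2 ≤ (1 / 4) * (fderiv ℝ (fderiv ℝ rhoHeis) 0 h h +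
          fderiv ℝ (fderiv ℝ rhoHeis) 0 (Complex.I • h) (Complex.I • h))) ∧
    -- ... but fails the strong ℂ-linear convexity inequality at (0,0)
    (¬ ∃ c : ℝ, 0 < c ∧ ∀ z : EuclideanSpace ℂ (Fin 2), rhoHeis z < 0 →
      c * ‖(0 : EuclideanSpace ℂ (Fin 2)) - z‖ ^ 2 ≤
        ‖Complex.I / 2 * (0 - z 1)‖) :=
  ⟨rhoTilde_strongly_linearly_convex, rhoTilde_not_strongly_convex,
    rhoHeis_strongly_pseudoconvex, rhoHeis_not_strongly_linearly_convex⟩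
end

section
/- (Quantitative C^{1,1} implicit function theorem) Let F : ℝ^{N-1} × ℝ → ℝ be C^{1,1} with ‖F‖_{C^{1,1}} ≤ M, F(0,0) = 0, and ∂_y F(0,0) = 1. Then there exist a = 1/(8M²) and b = 1/(2M) such that for each |x| ≤ a the equation F(x,y) = 0 has a unique solution y = φ(x) with |y| ≤ b, and φ is C^{1,1} on {|x| ≤ a} with ‖φ‖_{C^{1,1}} ≤ C M⁴ for an absolute constant C. -/
/-!
Because `∂_y F (0, 0) = 1` and `DF` is `M`-Lipschitz, `∂_y F ≥ 1/2` on the box of radius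
`1/(2M)`, so `y ↦ F (x, y)` grows at rate at least `1/2` there. The intermediate value theorem
gives a zero `φ x` in the box, and for two zeros `(x₁, y₁)`, `(x₂, y₂)` in the box
`|y₁ - y₂| ≤ 2 |F (x₂, y₁)| = 2 |F (x₂, y₁) - F (x₁, y₁)| ≤ 2M ‖x₁ - x₂‖`: this is both uniqueness
and Lipschitz continuity of `φ`. Differentiating `F (x, φ x) = 0` along the Lipschitz graph gives
`Dφ = -(∂_y F)⁻¹ ∂_x F`, a quotient of `M`-Lipschitz maps with denominator at least `1/2`.
-/

open Filter Topology Set Asymptotics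

section ImplicitDerivative

variable {E : Type*} [NormedAddCommGroup E] [NormedSpace ℝ E]

/-- `-(∂_y)⁻¹ ∂_x` of `L`: the derivative of `x ↦ φ x` on the zero set `F (x, φ x) = 0`
when `L = DF (x, φ x)`. -/
noncomputable def implicitFDeriv (L : E × ℝ →L[ℝ] ℝ) : E →L[ℝ] ℝ :=
  -(L (0, 1))⁻¹ • L.comp (ContinuousLinearMap.inl ℝ E ℝ)

lemma abs_apply_zero_one_le (L : E × ℝ →L[ℝ] ℝ) : |L (0, 1)| ≤ ‖L‖ := by
  simpa [Prod.norm_def] using L.le_opNorm (0, 1)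

lemma apply_mk_eq_add_mul (L : E × ℝ →L[ℝ] ℝ) (u : E) (t : ℝ) :
    L (u, t) = L (u, 0) + t * L (0, 1) := by
  rw [← smul_eq_mul, ← map_smul, ← map_add]
  simp

lemma implicitFDeriv_apply (L : E × ℝ →L[ℝ] ℝ) (u : E) :
    implicitFDeriv L u = -(L (0, 1))⁻¹ * L (u, 0) := rfl

lemma norm_implicitFDeriv_le {L : E × ℝ →L[ℝ] ℝ} {c : ℝ} (hc : 0 < c) (hL : c ≤ |L (0, 1)|) :
    ‖implicitFDeriv L‖ ≤ c⁻¹ * ‖L‖ := by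
  have hinv : |L (0, 1)|⁻¹ ≤ c⁻¹ := inv_anti₀ hc hL
  calc ‖implicitFDeriv L‖ ≤ |L (0, 1)|⁻¹ * (‖L‖ * ‖ContinuousLinearMap.inl ℝ E ℝ‖) := by
        rw [implicitFDeriv, norm_smul, norm_neg, norm_inv, Real.norm_eq_abs]
        gcongr
        exact L.opNorm_comp_le _
    _ ≤ c⁻¹ * (‖L‖ * 1) := by
        gcongr
        exact ContinuousLinearMap.norm_inl_le_one ℝ E ℝ
    _ = c⁻¹ * ‖L‖ := by rw [mul_one]

lemma norm_implicitFDeriv_sub_le {L L' : E × ℝ →L[ℝ] ℝ} {c : ℝ} (hc : 0 < c)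
    (hL : c ≤ |L (0, 1)|) (hL' : c ≤ |L' (0, 1)|) :
    ‖implicitFDeriv L - implicitFDeriv L'‖ ≤ (c⁻¹ + c⁻¹ * c⁻¹ * ‖L'‖) * ‖L - L'‖ := by
  have ha : L (0, 1) ≠ 0 := abs_pos.1 (hc.trans_le hL)
  have ha' : L' (0, 1) ≠ 0 := abs_pos.1 (hc.trans_le hL')
  have hsplit : implicitFDeriv L - implicitFDeriv L' =
      -(L (0, 1))⁻¹ • (L - L').comp (ContinuousLinearMap.inl ℝ E ℝ) +
        ((L' (0, 1) - L (0, 1)) * (L (0, 1))⁻¹) • implicitFDeriv L' := by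
    ext u
    simp only [implicitFDeriv, sub_apply, add_apply,
      smul_apply, ContinuousLinearMap.comp_apply, smul_eq_mul]
    field_simp
    ring
  have hdiff : |L' (0, 1) - L (0, 1)| ≤ ‖L - L'‖ := by
    simpa [abs_sub_comm] using abs_apply_zero_one_le (L - L')
  have hinv : |L (0, 1)|⁻¹ ≤ c⁻¹ := inv_anti₀ hc hL
  calc ‖implicitFDeriv L - implicitFDeriv L'‖
      ≤ |L (0, 1)|⁻¹ * (‖L - L'‖ * 1) +
          |L' (0, 1) - L (0, 1)| * |L (0, 1)|⁻¹ * ‖implicitFDeriv L'‖ := by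
        rw [hsplit]
        refine (norm_add_le _ _).trans (add_le_add ?_ ?_)
        · rw [norm_smul, norm_neg, norm_inv, Real.norm_eq_abs]
          gcongr
          exact (ContinuousLinearMap.opNorm_comp_le _ _).trans
            (by gcongr; exact ContinuousLinearMap.norm_inl_le_one ℝ E ℝ)
        · rw [norm_smul, Real.norm_eq_abs, abs_mul, abs_inv]
    _ ≤ c⁻¹ * (‖L - L'‖ * 1) + ‖L - L'‖ * c⁻¹ * (c⁻¹ * ‖L'‖) := by
        gcongr
        exact norm_implicitFDeriv_le hc hL'
    _ = (c⁻¹ + c⁻¹ * c⁻¹ * ‖L'‖) * ‖L - L'‖ := by ring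

lemma hasFDerivAt_implicitFDeriv {F : E × ℝ → ℝ} {L : E × ℝ →L[ℝ] ℝ} {φ : E → ℝ} {x₀ : E}
    (hF : HasFDerivAt F L (x₀, φ x₀)) (hL : L (0, 1) ≠ 0)
    (hφ : ∀ᶠ x in 𝓝 x₀, F (x, φ x) = 0)
    (hφ' : (fun x ↦ φ x - φ x₀) =O[𝓝 x₀] fun x ↦ x - x₀) :
    HasFDerivAt φ (implicitFDeriv L) x₀ := by
  set g : E → E × ℝ := fun x ↦ (x, φ x)
  have hg : (fun x ↦ g x - g x₀) =O[𝓝 x₀] fun x ↦ x - x₀ := (isBigO_refl _ _).prod_left hφ'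
  have hg_tendsto : Tendsto g (𝓝 x₀) (𝓝 (g x₀)) :=
    tendsto_sub_nhds_zero_iff.1 <| hg.trans_tendsto <| tendsto_sub_nhds_zero_iff.2 tendsto_id
  have hcomp := (hF.isLittleO.comp_tendsto hg_tendsto).trans_isBigO hg
  refine HasFDerivAt.of_isLittleO <| (hcomp.const_mul_left (-(L (0, 1))⁻¹)).congr' ?_ .rfl
  filter_upwards [hφ] with x hx
  simp only [Function.comp_apply, g, hx, hφ.self_of_nhds, Prod.mk_sub_mk, implicitFDeriv_apply]
  rw [apply_mk_eq_add_mul L (x - x₀)]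
  field_simp
  ring

end ImplicitDerivative

section RealLine

variable {g : ℝ → ℝ} {c : ℝ}

lemma mul_abs_sub_le_abs_sub {s : Set ℝ}
    (hg : ∀ y₁ ∈ s, ∀ y₂ ∈ s, y₁ ≤ y₂ → c * (y₂ - y₁) ≤ g y₂ - g y₁)
    {y₁ y₂ : ℝ} (h₁ : y₁ ∈ s) (h₂ : y₂ ∈ s) : c * |y₁ - y₂| ≤ |g y₁ - g y₂| := by
  rcases le_total y₁ y₂ with h | h
  · rw [abs_sub_comm y₁, abs_of_nonneg (sub_nonneg.2 h), abs_sub_comm]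
    exact (hg y₁ h₁ y₂ h₂ h).trans (le_abs_self _)
  · rw [abs_of_nonneg (sub_nonneg.2 h)]
    exact (hg y₂ h₂ y₁ h₁ h).trans (le_abs_self _)

lemma exists_mem_Icc_eq_zero_of_mul_sub_le {b : ℝ} (hb : 0 ≤ b)
    (hg : ContinuousOn g (Icc (-b) b))
    (hmono : ∀ y₁ ∈ Icc (-b) b, ∀ y₂ ∈ Icc (-b) b, y₁ ≤ y₂ → c * (y₂ - y₁) ≤ g y₂ - g y₁)
    (h0 : |g 0| ≤ c * b) : ∃ y ∈ Icc (-b) b, g y = 0 := by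
  have h0mem : (0 : ℝ) ∈ Icc (-b) b := ⟨neg_nonpos.2 hb, hb⟩
  have hbmem : b ∈ Icc (-b) b := ⟨neg_le_self hb, le_rfl⟩
  have hnbmem : -b ∈ Icc (-b) b := ⟨le_rfl, neg_le_self hb⟩
  have hlow := hmono (-b) hnbmem 0 h0mem (neg_nonpos.2 hb)
  have hhigh := hmono 0 h0mem b hbmem hb
  obtain ⟨h0l, h0u⟩ := abs_le.1 h0
  exact intermediate_value_Icc (neg_le_self hb) hg
    ⟨by linarith, by linarith⟩

end RealLine

section ImplicitFunction

variable {E : Type*} [NormedAddCommGroup E] [NormedSpace ℝ E] {F : E × ℝ → ℝ} {M : ℝ}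

lemma one_le_of_fderiv_apply_zero_one_eq_one (hbound : ∀ p, ‖fderiv ℝ F p‖ ≤ M)
    (hdy : fderiv ℝ F (0, 0) (0, 1) = 1) : 1 ≤ M := by
  simpa [hdy] using (abs_apply_zero_one_le (fderiv ℝ F (0, 0))).trans (hbound _)

lemma half_le_fderiv_apply_zero_one (hLip : LipschitzWith M.toNNReal (fderiv ℝ F))
    (hdy : fderiv ℝ F (0, 0) (0, 1) = 1) (hM : 0 < M) {p : E × ℝ} (hp : ‖p‖ ≤ 1 / (2 * M)) :
    1 / 2 ≤ fderiv ℝ F p (0, 1) := by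
  have h := (abs_apply_zero_one_le (fderiv ℝ F p - fderiv ℝ F (0, 0))).trans
    (hLip.norm_sub_le p (0, 0))
  rw [sub_apply, hdy, Prod.mk_zero_zero, sub_zero, Real.coe_toNNReal _ hM.le] at h
  have hMp : M * ‖p‖ ≤ 1 / 2 :=
    calc M * ‖p‖ ≤ M * (1 / (2 * M)) := by gcongr
      _ = 1 / 2 := by field_simp
  linarith [(abs_le.1 (h.trans hMp)).1]

lemma mul_sub_le_sub_of_le_fderiv_apply (hF : Differentiable ℝ F) (x : E) {s : Set ℝ}
    (hs : Convex ℝ s) {c : ℝ} (hc : ∀ y ∈ s, c ≤ fderiv ℝ F (x, y) (0, 1)) :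
    ∀ y₁ ∈ s, ∀ y₂ ∈ s, y₁ ≤ y₂ → c * (y₂ - y₁) ≤ F (x, y₂) - F (x, y₁) := by
  have hderiv (y : ℝ) : HasDerivAt (fun y ↦ F (x, y)) (fderiv ℝ F (x, y) (0, 1)) y :=
    (hF (x, y)).hasFDerivAt.comp_hasDerivAt y ((hasDerivAt_const y x).prodMk (hasDerivAt_id y))
  refine hs.mul_sub_le_image_sub_of_le_deriv
    (fun y _ ↦ (hderiv y).continuousAt.continuousWithinAt)
    (fun y _ ↦ (hderiv y).differentiableAt.differentiableWithinAt) fun y hy ↦ ?_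
  rw [(hderiv y).deriv]
  exact hc y (interior_subset hy)

lemma half_mul_sub_le_sub_of_norm_le (hF : Differentiable ℝ F)
    (hLip : LipschitzWith M.toNNReal (fderiv ℝ F)) (hdy : fderiv ℝ F (0, 0) (0, 1) = 1)
    (hM : 0 < M) {x : E} (hx : ‖x‖ ≤ 1 / (2 * M)) :
    ∀ y₁ ∈ Icc (-(1 / (2 * M))) (1 / (2 * M)), ∀ y₂ ∈ Icc (-(1 / (2 * M))) (1 / (2 * M)),
      y₁ ≤ y₂ → 1 / 2 * (y₂ - y₁) ≤ F (x, y₂) - F (x, y₁) :=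
  mul_sub_le_sub_of_le_fderiv_apply hF x (convex_Icc _ _) fun _ hy ↦
    half_le_fderiv_apply_zero_one hLip hdy hM (max_le hx (abs_le.2 hy))

lemma abs_sub_le_of_eq_zero (hF : Differentiable ℝ F) (hbound : ∀ p, ‖fderiv ℝ F p‖ ≤ M)
    (hLip : LipschitzWith M.toNNReal (fderiv ℝ F)) (hdy : fderiv ℝ F (0, 0) (0, 1) = 1)
    (hM : 0 < M) {x₁ x₂ : E} {y₁ y₂ : ℝ} (hx₂ : ‖x₂‖ ≤ 1 / (2 * M))
    (hy₁ : |y₁| ≤ 1 / (2 * M)) (hy₂ : |y₂| ≤ 1 / (2 * M))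
    (h₁ : F (x₁, y₁) = 0) (h₂ : F (x₂, y₂) = 0) : |y₁ - y₂| ≤ 2 * M * ‖x₁ - x₂‖ := by
  have hmono := mul_abs_sub_le_abs_sub (half_mul_sub_le_sub_of_norm_le hF hLip hdy hM hx₂)
    (abs_le.1 hy₁) (abs_le.1 hy₂)
  have hlip : ‖F (x₂, y₁) - F (x₁, y₁)‖ ≤ M * ‖(x₂, y₁) - (x₁, y₁)‖ :=
    convex_univ.norm_image_sub_le_of_norm_fderiv_le (fun p _ ↦ hF p) (fun p _ ↦ hbound p)
      trivial trivial
  rw [h₂, sub_zero] at hmono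
  rw [h₁, sub_zero, Prod.mk_sub_mk, sub_self, Prod.norm_def, norm_zero,
    max_eq_left (norm_nonneg _), norm_sub_rev, Real.norm_eq_abs] at hlip
  linarith

lemma one_div_four_mul_sq_le (hM : 1 ≤ M) : 1 / (4 * M ^ 2) ≤ 1 / (2 * M) :=
  one_div_le_one_div_of_le (by positivity) (by nlinarith)

lemma exists_abs_le_and_eq_zero (hF : Differentiable ℝ F) (hbound : ∀ p, ‖fderiv ℝ F p‖ ≤ M)
    (hLip : LipschitzWith M.toNNReal (fderiv ℝ F)) (hF0 : F (0, 0) = 0)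
    (hdy : fderiv ℝ F (0, 0) (0, 1) = 1) (hM : 1 ≤ M) {x : E} (hx : ‖x‖ ≤ 1 / (4 * M ^ 2)) :
    ∃ y, |y| ≤ 1 / (2 * M) ∧ F (x, y) = 0 := by
  have hM0 : 0 < M := by linarith
  have hFx : |F (x, 0)| ≤ 1 / 2 * (1 / (2 * M)) := by
    have h := convex_univ.norm_image_sub_le_of_norm_fderiv_le (fun p _ ↦ hF p)
      (fun p _ ↦ hbound p) (Set.mem_univ ((0 : E), (0 : ℝ))) (Set.mem_univ (x, 0))
    rw [hF0, sub_zero, Prod.mk_sub_mk, sub_zero, sub_zero, Prod.norm_def, norm_zero,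
      max_eq_left (norm_nonneg _), Real.norm_eq_abs] at h
    calc |F (x, 0)| ≤ M * (1 / (4 * M ^ 2)) := h.trans (by gcongr)
      _ = 1 / 2 * (1 / (2 * M)) := by field_simp; ring
  obtain ⟨y, hy, hy0⟩ := exists_mem_Icc_eq_zero_of_mul_sub_le (by positivity)
    (hF.continuous.comp (continuous_const.prodMk continuous_id)).continuousOn
    (half_mul_sub_le_sub_of_norm_le hF hLip hdy hM0 (hx.trans (one_div_four_mul_sq_le hM))) hFx
  exact ⟨y, abs_le.2 hy, hy0⟩

lemma exists_implicitFunction (hF : Differentiable ℝ F) (hbound : ∀ p, ‖fderiv ℝ F p‖ ≤ M)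
    (hLip : LipschitzWith M.toNNReal (fderiv ℝ F)) (hF0 : F (0, 0) = 0)
    (hdy : fderiv ℝ F (0, 0) (0, 1) = 1) (hM : 1 ≤ M) :
    ∃ φ : E → ℝ, ∀ x, ‖x‖ ≤ 1 / (4 * M ^ 2) → |φ x| ≤ 1 / (2 * M) ∧ F (x, φ x) = 0 := by
  have h (x : E) : ∃ y, ‖x‖ ≤ 1 / (4 * M ^ 2) → |y| ≤ 1 / (2 * M) ∧ F (x, y) = 0 := by
    by_cases hx : ‖x‖ ≤ 1 / (4 * M ^ 2)
    · obtain ⟨y, hy⟩ := exists_abs_le_and_eq_zero hF hbound hLip hF0 hdy hM hx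
      exact ⟨y, fun _ ↦ hy⟩
    · exact ⟨0, fun h ↦ absurd h hx⟩
  choose φ hφ using h
  exact ⟨φ, hφ⟩

section Graph

variable {φ : E → ℝ}

lemma norm_graph_sub_le (hF : Differentiable ℝ F) (hbound : ∀ p, ‖fderiv ℝ F p‖ ≤ M)
    (hLip : LipschitzWith M.toNNReal (fderiv ℝ F)) (hdy : fderiv ℝ F (0, 0) (0, 1) = 1)
    (hM : 1 ≤ M) (hφ : ∀ x, ‖x‖ ≤ 1 / (4 * M ^ 2) → |φ x| ≤ 1 / (2 * M) ∧ F (x, φ x) = 0)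
    {x₁ x₂ : E} (h₁ : ‖x₁‖ ≤ 1 / (4 * M ^ 2)) (h₂ : ‖x₂‖ ≤ 1 / (4 * M ^ 2)) :
    ‖(x₁, φ x₁) - (x₂, φ x₂)‖ ≤ 2 * M * ‖x₁ - x₂‖ := by
  rw [Prod.mk_sub_mk, Prod.norm_def, Real.norm_eq_abs]
  refine max_le (le_mul_of_one_le_left (norm_nonneg _) (by linarith)) ?_
  exact abs_sub_le_of_eq_zero hF hbound hLip hdy (by linarith)
    (h₂.trans (one_div_four_mul_sq_le hM)) (hφ x₁ h₁).1 (hφ x₂ h₂).1 (hφ x₁ h₁).2 (hφ x₂ h₂).2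

lemma half_le_fderiv_graph_apply_zero_one (hLip : LipschitzWith M.toNNReal (fderiv ℝ F))
    (hdy : fderiv ℝ F (0, 0) (0, 1) = 1) (hM : 1 ≤ M)
    (hφ : ∀ x, ‖x‖ ≤ 1 / (4 * M ^ 2) → |φ x| ≤ 1 / (2 * M) ∧ F (x, φ x) = 0)
    {x : E} (hx : ‖x‖ ≤ 1 / (4 * M ^ 2)) : 1 / 2 ≤ fderiv ℝ F (x, φ x) (0, 1) :=
  half_le_fderiv_apply_zero_one hLip hdy (by linarith)
    (max_le (hx.trans (one_div_four_mul_sq_le hM)) (hφ x hx).1)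

lemma hasFDerivAt_of_forall_eq_zero (hF : Differentiable ℝ F)
    (hbound : ∀ p, ‖fderiv ℝ F p‖ ≤ M) (hLip : LipschitzWith M.toNNReal (fderiv ℝ F))
    (hdy : fderiv ℝ F (0, 0) (0, 1) = 1) (hM : 1 ≤ M)
    (hφ : ∀ x, ‖x‖ ≤ 1 / (4 * M ^ 2) → |φ x| ≤ 1 / (2 * M) ∧ F (x, φ x) = 0)
    {x₀ : E} (hx₀ : ‖x₀‖ < 1 / (4 * M ^ 2)) :
    HasFDerivAt φ (implicitFDeriv (fderiv ℝ F (x₀, φ x₀))) x₀ := by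
  have hnhds : ∀ᶠ x in 𝓝 x₀, ‖x‖ ≤ 1 / (4 * M ^ 2) :=
    (continuous_norm.tendsto x₀).eventually_le_const hx₀
  refine hasFDerivAt_implicitFDeriv (hF _).hasFDerivAt ?_ (hnhds.mono fun x hx ↦ (hφ x hx).2) ?_
  · exact (one_half_pos.trans_le
      (half_le_fderiv_graph_apply_zero_one hLip hdy hM hφ hx₀.le)).ne'
  · refine IsBigO.of_bound (2 * M) (hnhds.mono fun x hx ↦ ?_)
    rw [Real.norm_eq_abs]
    exact (abs_sub_le_of_eq_zero hF hbound hLip hdy (by linarith)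
      (hx₀.le.trans (one_div_four_mul_sq_le hM)) (hφ x hx).1 (hφ x₀ hx₀.le).1 (hφ x hx).2
      (hφ x₀ hx₀.le).2)

lemma norm_implicitFDeriv_graph_sub_le (hF : Differentiable ℝ F)
    (hbound : ∀ p, ‖fderiv ℝ F p‖ ≤ M) (hLip : LipschitzWith M.toNNReal (fderiv ℝ F))
    (hdy : fderiv ℝ F (0, 0) (0, 1) = 1) (hM : 1 ≤ M)
    (hφ : ∀ x, ‖x‖ ≤ 1 / (4 * M ^ 2) → |φ x| ≤ 1 / (2 * M) ∧ F (x, φ x) = 0)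
    {x₁ x₂ : E} (h₁ : ‖x₁‖ ≤ 1 / (4 * M ^ 2)) (h₂ : ‖x₂‖ ≤ 1 / (4 * M ^ 2)) :
    ‖implicitFDeriv (fderiv ℝ F (x₁, φ x₁)) - implicitFDeriv (fderiv ℝ F (x₂, φ x₂))‖ ≤
      (4 * M ^ 2 + 8 * M ^ 3) * ‖x₁ - x₂‖ := by
  have hhalf {x : E} (hx : ‖x‖ ≤ 1 / (4 * M ^ 2)) : 1 / 2 ≤ |fderiv ℝ F (x, φ x) (0, 1)| :=
    (half_le_fderiv_graph_apply_zero_one hLip hdy hM hφ hx).trans (le_abs_self _)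
  have hL : ‖fderiv ℝ F (x₁, φ x₁) - fderiv ℝ F (x₂, φ x₂)‖ ≤ M * (2 * M * ‖x₁ - x₂‖) := by
    refine (hLip.norm_sub_le _ _).trans ?_
    rw [Real.coe_toNNReal _ (by linarith)]
    gcongr
    exact norm_graph_sub_le hF hbound hLip hdy hM hφ h₁ h₂
  calc _ ≤ ((1 / 2)⁻¹ + (1 / 2)⁻¹ * (1 / 2)⁻¹ * ‖fderiv ℝ F (x₂, φ x₂)‖) *
        ‖fderiv ℝ F (x₁, φ x₁) - fderiv ℝ F (x₂, φ x₂)‖ :=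
        norm_implicitFDeriv_sub_le one_half_pos (hhalf h₁) (hhalf h₂)
    _ ≤ (2 + 4 * M) * (M * (2 * M * ‖x₁ - x₂‖)) := by
        norm_num only
        gcongr
        exact hbound _
    _ = (4 * M ^ 2 + 8 * M ^ 3) * ‖x₁ - x₂‖ := by ring

end Graph

end ImplicitFunction

/-- Quantitative `C^{1,1}` implicit function theorem: there is an absolute constant `C` such
that whenever `F : ℝ^{N-1} × ℝ → ℝ` is `C^{1,1}` with `‖F‖_{C^{1,1}} ≤ M`, `F(0,0) = 0` and
`∂_y F(0,0) = 1`, then with `a = 1/(8M²)`, `b = 1/(2M)`, for every `|x| ≤ a` the equation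
`F(x,y) = 0` has a unique solution `y = φ(x)` with `|y| ≤ b`, and `φ` is `C^{1,1}` on
`{|x| ≤ a}` with `‖φ‖_{C^{1,1}} ≤ C·M⁴`. -/
theorem quantitative_C11_implicit_function_theorem :
    ∃ C : ℝ, 0 < C ∧
      ∀ (m : ℕ) (F : EuclideanSpace ℝ (Fin m) × ℝ → ℝ) (M : ℝ),
        ContDiff ℝ 1 F →
        (∀ p, |F p| ≤ M) →
        (∀ p, ‖fderiv ℝ F p‖ ≤ M) →
        LipschitzWith (Real.toNNReal M) (fderiv ℝ F) →
        F (0, 0) = 0 →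
        fderiv ℝ F (0, 0) (0, 1) = 1 →
        ∃ φ : EuclideanSpace ℝ (Fin m) → ℝ,
          (∀ x, ‖x‖ ≤ 1 / (8 * M ^ 2) →
            |φ x| ≤ 1 / (2 * M) ∧ F (x, φ x) = 0 ∧
              ∀ y : ℝ, |y| ≤ 1 / (2 * M) → F (x, y) = 0 → y = φ x) ∧
          (∀ x, ‖x‖ ≤ 1 / (8 * M ^ 2) →
            |φ x| ≤ C * M ^ 4 ∧ DifferentiableAt ℝ φ x ∧ ‖fderiv ℝ φ x‖ ≤ C * M ^ 4) ∧
          (∀ x₁ x₂, ‖x₁‖ ≤ 1 / (8 * M ^ 2) → ‖x₂‖ ≤ 1 / (8 * M ^ 2) →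
            ‖fderiv ℝ φ x₁ - fderiv ℝ φ x₂‖ ≤ C * M ^ 4 * ‖x₁ - x₂‖) := by
  refine ⟨12, by norm_num, fun m F M hF _ hbound hLip hF0 hdy ↦ ?_⟩
  have hF' : Differentiable ℝ F := hF.differentiable one_ne_zero
  have hM : 1 ≤ M := one_le_of_fderiv_apply_zero_one_eq_one hbound hdy
  have hM4 : 1 ≤ M ^ 4 := one_le_pow₀ hM
  obtain ⟨φ, hφ⟩ := exists_implicitFunction hF' hbound hLip hF0 hdy hM
  have hlt {x : EuclideanSpace ℝ (Fin m)} (hx : ‖x‖ ≤ 1 / (8 * M ^ 2)) : ‖x‖ < 1 / (4 * M ^ 2) :=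
    hx.trans_lt (one_div_lt_one_div_of_lt (by positivity) (by nlinarith))
  have hderiv {x : EuclideanSpace ℝ (Fin m)} (hx : ‖x‖ ≤ 1 / (8 * M ^ 2)) :
      HasFDerivAt φ (implicitFDeriv (fderiv ℝ F (x, φ x))) x :=
    hasFDerivAt_of_forall_eq_zero hF' hbound hLip hdy hM hφ (hlt hx)
  refine ⟨φ, fun x hx ↦ ⟨(hφ x (hlt hx).le).1, (hφ x (hlt hx).le).2, fun y hy hy0 ↦ ?_⟩,
    fun x hx ↦ ⟨?_, (hderiv hx).differentiableAt, ?_⟩, fun x₁ x₂ h₁ h₂ ↦ ?_⟩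
  · have h := abs_sub_le_of_eq_zero hF' hbound hLip hdy (by linarith)
      ((hlt hx).le.trans (one_div_four_mul_sq_le hM)) hy (hφ x (hlt hx).le).1 hy0
      (hφ x (hlt hx).le).2
    rwa [sub_self, norm_zero, mul_zero, abs_nonpos_iff, sub_eq_zero] at h
  · refine (hφ x (hlt hx).le).1.trans ?_
    calc 1 / (2 * M) ≤ 1 := by rw [div_le_one (by linarith)]; linarith
      _ ≤ 12 * M ^ 4 := by linarith
  · rw [(hderiv hx).fderiv]
    calc _ ≤ (1 / 2)⁻¹ * ‖fderiv ℝ F (x, φ x)‖ := norm_implicitFDeriv_le one_half_pos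
          ((half_le_fderiv_graph_apply_zero_one hLip hdy hM hφ (hlt hx).le).trans (le_abs_self _))
      _ ≤ 2 * M := by norm_num only; gcongr; exact hbound _
      _ ≤ 12 * M ^ 4 := by nlinarith [le_self_pow₀ hM (by norm_num : 4 ≠ 0)]
  · rw [(hderiv h₁).fderiv, (hderiv h₂).fderiv]
    refine (norm_implicitFDeriv_graph_sub_le hF' hbound hLip hdy hM hφ (hlt h₁).le
      (hlt h₂).le).trans ?_
    gcongr
    nlinarith [le_self_pow₀ hM (by norm_num : 4 ≠ 0), pow_le_pow_right₀ hM (by norm_num : 2 ≤ 4),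
      pow_le_pow_right₀ hM (by norm_num : 3 ≤ 4)]
end

section
/- In the setting of the quantitative C^{1,1} implicit function theorem, one can write F(x,y) = A(x,y)(y − φ(x)) where A(x,y) = ∫₀¹ ∂_y F(x, s(y − φ(x)) + φ(x)) ds is Lipschitz on the box and A(x,y) ≥ 1/2 there. -/
/-!
Along the vertical segment from `(x, φ x)` to `(x, y)` the fundamental theorem of calculus gives
`F (x, y) - F (x, φ x) = A (x, y) (y - φ x)`, and `F (x, φ x) = 0`. The segment stays in the box,
where `∂_y F ≥ 1/2`, so its average `A` is at least `1/2`. Moving `(x, y)` moves every point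
`(x, φ x + s (y - φ x))` of the segment by at most `(1 + Lip φ)(‖Δx‖ + |Δy|)`, so the Lipschitz
bound on `DF` passes to the average `A`.
-/

open MeasureTheory intervalIntegral Set

section SegmentAverage

variable {E : Type*} [SeminormedAddCommGroup E]

/-- With `G = ∂_y F` this is the paper's `A (x, y)`. -/
noncomputable def segmentAverage (G : E × ℝ → ℝ) (φ : E → ℝ) (x : E) (y : ℝ) : ℝ :=
  ∫ s in (0 : ℝ)..1, G (x, s * (y - φ x) + φ x)

lemma mul_sub_add_mem_uIcc {s : ℝ} (hs : s ∈ Icc (0 : ℝ) 1) (y₀ y : ℝ) :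
    s * (y - y₀) + y₀ ∈ uIcc y₀ y := by
  rw [← segment_eq_uIcc]
  exact ⟨1 - s, s, by linarith [hs.2], hs.1, by ring, by simp only [smul_eq_mul]; ring⟩

lemma le_integral_comp_mul_sub_add {g : ℝ → ℝ} (hg : Continuous g) {c y₀ y : ℝ}
    (h : ∀ t ∈ uIcc y₀ y, c ≤ g t) : c ≤ ∫ s in (0 : ℝ)..1, g (s * (y - y₀) + y₀) := by
  have hint : IntervalIntegrable (fun s => g (s * (y - y₀) + y₀)) volume 0 1 :=
    (hg.comp (by fun_prop)).intervalIntegrable 0 1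
  calc c = ∫ _ in (0 : ℝ)..1, c := by simp
    _ ≤ ∫ s in (0 : ℝ)..1, g (s * (y - y₀) + y₀) :=
      integral_mono_on zero_le_one intervalIntegrable_const hint
        fun s hs => h _ (mul_sub_add_mem_uIcc hs y₀ y)

lemma sub_eq_integral_deriv_mul {g g' : ℝ → ℝ} (hg : ∀ t, HasDerivAt g (g' t) t)
    (hg' : Continuous g') (y₀ y : ℝ) :
    g y - g y₀ = (∫ s in (0 : ℝ)..1, g' (s * (y - y₀) + y₀)) * (y - y₀) := by
  have hderiv : ∀ s ∈ uIcc (0 : ℝ) 1, HasDerivAt (fun s => g (s * (y - y₀) + y₀))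
      (g' (s * (y - y₀) + y₀) * (y - y₀)) s :=
    fun s _ => (hg _).comp s ((hasDerivAt_mul_const (y - y₀)).add_const y₀)
  have hint : IntervalIntegrable (fun s => g' (s * (y - y₀) + y₀) * (y - y₀)) volume 0 1 :=
    ((hg'.comp (by fun_prop)).mul continuous_const).intervalIntegrable 0 1
  rw [← intervalIntegral.integral_mul_const, integral_eq_sub_of_hasDerivAt hderiv hint]
  simp

lemma norm_sub_segment_point_le {φ : E → ℝ} {Kφ : NNReal} (hφ : LipschitzWith Kφ φ)
    {s : ℝ} (hs : s ∈ Icc (0 : ℝ) 1) (x x' : E) (y y' : ℝ) :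
    ‖((x, s * (y - φ x) + φ x) : E × ℝ) - (x', s * (y' - φ x') + φ x')‖ ≤
      (1 + Kφ) * (‖x - x'‖ + |y - y'|) := by
  have hφx : |φ x - φ x'| ≤ Kφ * ‖x - x'‖ := by
    simpa only [dist_eq_norm, Real.norm_eq_abs] using hφ.dist_le_mul x x'
  have hsnd : |s * (y - φ x) + φ x - (s * (y' - φ x') + φ x')| ≤ |y - y'| + Kφ * ‖x - x'‖ :=
    calc |s * (y - φ x) + φ x - (s * (y' - φ x') + φ x')|
        = |s * (y - y') + (1 - s) * (φ x - φ x')| := by ring_nf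
      _ ≤ s * |y - y'| + (1 - s) * |φ x - φ x'| := by
        grw [abs_add_le, abs_mul, abs_mul, abs_of_nonneg hs.1, abs_of_nonneg (sub_nonneg.2 hs.2)]
      _ ≤ |y - y'| + Kφ * ‖x - x'‖ := by
        nlinarith [hs.1, hs.2, abs_nonneg (y - y'), abs_nonneg (φ x - φ x')]
  rw [Prod.mk_sub_mk, Prod.norm_def, Real.norm_eq_abs, max_le_iff]
  have hK : (0 : ℝ) ≤ Kφ := Kφ.coe_nonneg
  constructor <;> nlinarith [norm_nonneg (x - x'), abs_nonneg (y - y')]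

lemma abs_segmentAverage_sub_le {G : E × ℝ → ℝ} {K : NNReal} (hG : LipschitzWith K G)
    {φ : E → ℝ} {Kφ : NNReal} (hφ : LipschitzWith Kφ φ) (x x' : E) (y y' : ℝ) :
    |segmentAverage G φ x y - segmentAverage G φ x' y'| ≤
      K * (1 + Kφ) * (‖x - x'‖ + |y - y'|) := by
  have hint : ∀ x y, IntervalIntegrable (fun s : ℝ => G (x, s * (y - φ x) + φ x)) volume 0 1 :=
    fun x y => (hG.continuous.comp (by fun_prop)).intervalIntegrable 0 1
  have hpoint : ∀ s ∈ uIoc (0 : ℝ) 1,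
      ‖G (x, s * (y - φ x) + φ x) - G (x', s * (y' - φ x') + φ x')‖ ≤
        K * (1 + Kφ) * (‖x - x'‖ + |y - y'|) := by
    intro s hs
    rw [uIoc_of_le zero_le_one] at hs
    rw [← dist_eq_norm, mul_assoc]
    exact (hG.dist_le_mul _ _).trans (mul_le_mul_of_nonneg_left
      (by simpa only [dist_eq_norm] using
        norm_sub_segment_point_le hφ (Ioc_subset_Icc_self hs) x x' y y') K.coe_nonneg)
  rw [segmentAverage, segmentAverage, ← integral_sub (hint x y) (hint x' y'), ← Real.norm_eq_abs]
  simpa using norm_integral_le_of_norm_le_const hpoint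

end SegmentAverage

lemma hasDerivAt_apply_prodMk_right {E G : Type*} [NormedAddCommGroup E] [NormedSpace ℝ E]
    [NormedAddCommGroup G] [NormedSpace ℝ G] {F : E × ℝ → G} {x : E} {t : ℝ}
    (hF : DifferentiableAt ℝ F (x, t)) :
    HasDerivAt (fun t => F (x, t)) (fderiv ℝ F (x, t) (0, 1)) t := by
  simpa [Function.comp_def] using (hF.hasFDerivAt.comp t (hasFDerivAt_prodMk_right x t)).hasDerivAt

lemma LipschitzWith.apply_of_norm_le_one {X E G : Type*} [PseudoMetricSpace X]
    [SeminormedAddCommGroup E] [NormedSpace ℝ E] [SeminormedAddCommGroup G] [NormedSpace ℝ G]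
    {f : X → E →L[ℝ] G} {K : NNReal} (hf : LipschitzWith K f) {v : E} (hv : ‖v‖ ≤ 1) :
    LipschitzWith K (fun p => f p v) :=
  LipschitzWith.of_dist_le_mul fun p q => by
    rw [dist_eq_norm, ← sub_apply]
    calc ‖(f p - f q) v‖ ≤ ‖f p - f q‖ * ‖v‖ := (f p - f q).le_opNorm v
      _ ≤ dist (f p) (f q) := by
        rw [← dist_eq_norm]
        exact mul_le_of_le_one_right dist_nonneg hv
      _ ≤ K * dist p q := hf.dist_le_mul p q

theorem implicit_function_factorization_general (m : ℕ)
    (F : EuclideanSpace ℝ (Fin m) × ℝ → ℝ) (M : ℝ)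
    (hC1 : ContDiff ℝ 1 F)
    (hlip : LipschitzWith (Real.toNNReal M) (fderiv ℝ F))
    (a b : ℝ)
    (φ : EuclideanSpace ℝ (Fin m) → ℝ) (Kφ : NNReal) (hφlip : LipschitzWith Kφ φ)
    (hφ : ∀ x, ‖x‖ ≤ a → |φ x| ≤ b ∧ F (x, φ x) = 0)
    (hFy : ∀ x y, ‖x‖ ≤ a → |y| ≤ b → (1 / 2 : ℝ) ≤ fderiv ℝ F (x, y) (0, 1)) :
    (∀ x y, ‖x‖ ≤ a → |y| ≤ b →
      F (x, y) =
        (∫ s in (0 : ℝ)..1, fderiv ℝ F (x, s * (y - φ x) + φ x) (0, 1)) * (y - φ x) ∧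
      (1 / 2 : ℝ) ≤ ∫ s in (0 : ℝ)..1, fderiv ℝ F (x, s * (y - φ x) + φ x) (0, 1)) ∧
    (∃ L : ℝ, 0 < L ∧ ∀ x y x' y', ‖x‖ ≤ a → |y| ≤ b → ‖x'‖ ≤ a → |y'| ≤ b →
      |(∫ s in (0 : ℝ)..1, fderiv ℝ F (x, s * (y - φ x) + φ x) (0, 1)) -
          (∫ s in (0 : ℝ)..1, fderiv ℝ F (x', s * (y' - φ x') + φ x') (0, 1))| ≤
        L * (‖x - x'‖ + |y - y'|)) := by
  set G : EuclideanSpace ℝ (Fin m) × ℝ → ℝ := fun p => fderiv ℝ F p (0, 1)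
  have hG : Continuous G := (hC1.continuous_fderiv one_ne_zero).clm_apply continuous_const
  have hGlip : LipschitzWith M.toNNReal G :=
    hlip.apply_of_norm_le_one (by simp [Prod.norm_def])
  have hderiv : ∀ x t, HasDerivAt (fun t => F (x, t)) (G (x, t)) t := fun x t =>
    hasDerivAt_apply_prodMk_right ((hC1.differentiable one_ne_zero) _)
  refine ⟨fun x y hx hy => ⟨?_, ?_⟩,
    ⟨M.toNNReal * (1 + Kφ) + 1, by positivity, fun x y x' y' _ _ _ _ => ?_⟩⟩
  · have h := sub_eq_integral_deriv_mul (hderiv x) (hG.comp (by fun_prop)) (φ x) y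
    rwa [(hφ x hx).2, sub_zero] at h
  · refine le_integral_comp_mul_sub_add (hG.comp (by fun_prop)) fun t ht => hFy x t hx ?_
    exact abs_le.2 (uIcc_subset_Icc (abs_le.1 (hφ x hx).1) (abs_le.1 hy) ht)
  · refine (abs_segmentAverage_sub_le hGlip hφlip x x' y y').trans ?_
    gcongr
    exact le_add_of_nonneg_right zero_le_one

/-- In the setting of the quantitative `C^{1,1}` implicit function theorem, one can write
`F(x,y) = A(x,y)(y − φ(x))` on the box, where
`A(x,y) = ∫₀¹ ∂_y F(x, s(y − φ(x)) + φ(x)) ds` satisfies `A ≥ 1/2` and is Lipschitz there. -/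
theorem implicit_function_factorization (m : ℕ)
    (F : EuclideanSpace ℝ (Fin m) × ℝ → ℝ) (M : ℝ)
    (hC1 : ContDiff ℝ 1 F)
    (hbd : ∀ p, |F p| ≤ M) (hbd1 : ∀ p, ‖fderiv ℝ F p‖ ≤ M)
    (hlip : LipschitzWith (Real.toNNReal M) (fderiv ℝ F))
    (hF0 : F (0, 0) = 0) (hFy0 : fderiv ℝ F (0, 0) (0, 1) = 1)
    (a b : ℝ) (ha : 0 < a) (hb : 0 < b)
    (φ : EuclideanSpace ℝ (Fin m) → ℝ) (Kφ : NNReal) (hφlip : LipschitzWith Kφ φ)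
    (hφ : ∀ x, ‖x‖ ≤ a → |φ x| ≤ b ∧ F (x, φ x) = 0)
    (hFy : ∀ x y, ‖x‖ ≤ a → |y| ≤ b → (1 / 2 : ℝ) ≤ fderiv ℝ F (x, y) (0, 1)) :
    (∀ x y, ‖x‖ ≤ a → |y| ≤ b →
      F (x, y) =
        (∫ s in (0 : ℝ)..1, fderiv ℝ F (x, s * (y - φ x) + φ x) (0, 1)) * (y - φ x) ∧
      (1 / 2 : ℝ) ≤ ∫ s in (0 : ℝ)..1, fderiv ℝ F (x, s * (y - φ x) + φ x) (0, 1)) ∧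
    (∃ L : ℝ, 0 < L ∧ ∀ x y x' y', ‖x‖ ≤ a → |y| ≤ b → ‖x'‖ ≤ a → |y'| ≤ b →
      |(∫ s in (0 : ℝ)..1, fderiv ℝ F (x, s * (y - φ x) + φ x) (0, 1)) -
          (∫ s in (0 : ℝ)..1, fderiv ℝ F (x', s * (y' - φ x') + φ x') (0, 1))| ≤
        L * (‖x - x'‖ + |y - y'|)) :=
  implicit_function_factorization_general m F M hC1 hlip a b φ Kφ hφlip hφ hFy
end
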